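/- arXiv:2411.11598 — 9 statements merged into one kernel-verified Lean document; each statement's English description precedes it below -/
import Mathlib

section
/- For every real number R > 1 and every integer k ≥ 1, one has ∑_{l=1}^{∞} (l^k / k!) R^{-l} ≤ R / (ln R)^{k+1}. -/
theorem carleman_maclaurin_bound (R : ℝ) (hR : 1 < R) (k : ℕ) (hk : 1 ≤ k) :
    (∑' l : ℕ, ((l + 1 : ℝ) ^ k / (k.factorial : ℝ)) * R ^ (-((l : ℤ) + 1))) ≤
      R / (Real.log R) ^ (k + 1) := by
  have hR0 : (0 : ℝ) < R := lt_trans one_pos hR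
  set c := Real.log R with hc_def
  have hc : 0 < c := Real.log_pos hR
  have hRe : R = Real.exp c := (Real.exp_log hR0).symm
  have hgcont : Continuous fun x : ℝ => x ^ k * Real.exp (-(c * x)) := by fun_prop
  have hfact : (0 : ℝ) < (k.factorial : ℝ) := by exact_mod_cast k.factorial_pos
  -- integrability on Ioi 0
  have hint : MeasureTheory.IntegrableOn (fun x : ℝ => x ^ k * Real.exp (-(c * x)))
      (Set.Ioi 0) := by
    have h := integrableOn_rpow_mul_exp_neg_mul_rpow (p := 1) (s := (k : ℝ)) (b := c)
      (by linarith [Nat.cast_nonneg (α := ℝ) k]) one_pos hc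
    simpa [Real.rpow_natCast, Real.rpow_one, neg_mul] using h
  -- value of the full integral
  have hI : ∫ x in Set.Ioi (0 : ℝ), x ^ k * Real.exp (-(c * x))
      = (k.factorial : ℝ) / c ^ (k + 1) := by
    have h := Real.integral_rpow_mul_exp_neg_mul_Ioi (a := ((k + 1 : ℕ) : ℝ)) (r := c)
      (by positivity) hc
    have hcast : ((k + 1 : ℕ) : ℝ) = (k : ℝ) + 1 := by push_cast; ring
    have hpow : ((1 : ℝ) / c) ^ ((k + 1 : ℕ) : ℝ) = (1 / c) ^ (k + 1) :=
      Real.rpow_natCast _ _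
    rw [hpow, hcast] at h
    rw [Real.Gamma_nat_eq_factorial] at h
    simp only [add_sub_cancel_right, Real.rpow_natCast] at h
    rw [h]
    field_simp
    rw [← mul_pow, one_div_mul_cancel hc.ne', one_pow]
  -- zpow rewrite
  have hz : ∀ l : ℕ, R ^ (-((l : ℤ) + 1)) = Real.exp (-(c * ((l : ℝ) + 1))) := by
    intro l
    rw [hRe]
    have hcast : (-((l : ℤ) + 1)) = -((l + 1 : ℕ) : ℤ) := by push_cast; ring
    rw [hcast, zpow_neg, zpow_natCast, ← Real.exp_nat_mul, ← Real.exp_neg]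
    congr 1
    push_cast
    ring
  -- per-term bound
  have key : ∀ l : ℕ, ((l : ℝ) + 1) ^ k * Real.exp (-(c * ((l : ℝ) + 1)))
      ≤ Real.exp c * ∫ x in ((l : ℝ) + 1)..((l : ℝ) + 2),
        x ^ k * Real.exp (-(c * x)) := by
    intro l
    set m : ℝ := (l : ℝ) + 1 with hm_def
    have hm : 1 ≤ m := by simp only [hm_def]; linarith [Nat.cast_nonneg (α := ℝ) l]
    have h1 : ∫ _ in m..(m + 1), (m ^ k * Real.exp (-(c * (m + 1))))
        ≤ ∫ x in m..(m + 1), x ^ k * Real.exp (-(c * x)) := by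
      apply intervalIntegral.integral_mono_on (by linarith)
        intervalIntegrable_const (hgcont.intervalIntegrable _ _)
      intro x hx
      obtain ⟨hx1, hx2⟩ := hx
      have hm0 : (0 : ℝ) ≤ m := by linarith
      apply mul_le_mul (pow_le_pow_left₀ hm0 hx1 k)
        (Real.exp_le_exp.2 (by nlinarith)) (Real.exp_pos _).le (pow_nonneg (by linarith) k)
    rw [intervalIntegral.integral_const] at h1
    have h2 : m ^ k * Real.exp (-(c * (m + 1)))
        ≤ ∫ x in m..(m + 1), x ^ k * Real.exp (-(c * x)) := by
      simpa using h1
    calc m ^ k * Real.exp (-(c * m))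
        = Real.exp c * (m ^ k * Real.exp (-(c * (m + 1)))) := by
          rw [← mul_assoc, mul_comm (Real.exp c) (m ^ k), mul_assoc, ← Real.exp_add]
          ring_nf
      _ ≤ Real.exp c * ∫ x in m..(m + 1), x ^ k * Real.exp (-(c * x)) :=
          mul_le_mul_of_nonneg_left h2 (Real.exp_pos _).le
      _ = Real.exp c * ∫ x in ((l : ℝ) + 1)..((l : ℝ) + 2), x ^ k * Real.exp (-(c * x)) := by
          have h22 : ((l : ℝ) + 1) + 1 = (l : ℝ) + 2 := by ring
          rw [hm_def, h22]
  -- partial sums of adjacent integrals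
  have sumI : ∀ n : ℕ, ∑ l ∈ Finset.range n,
      ∫ x in ((l : ℝ) + 1)..((l : ℝ) + 2), x ^ k * Real.exp (-(c * x))
      = ∫ x in (1 : ℝ)..((n : ℝ) + 1), x ^ k * Real.exp (-(c * x)) := by
    intro n
    have h := intervalIntegral.sum_integral_adjacent_intervals
      (μ := MeasureTheory.volume) (a := fun i : ℕ => (i : ℝ) + 1) (n := n)
      (f := fun x => x ^ k * Real.exp (-(c * x)))
      (fun i _ => hgcont.intervalIntegrable _ _)
    simp only [Nat.cast_zero, Nat.cast_add, Nat.cast_one, zero_add] at h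
    rw [← h]
    apply Finset.sum_congr rfl
    intro l _
    congr 1
    push_cast
    ring
  -- bound on the interval integral by the full integral
  have hIb : ∀ n : ℕ, ∫ x in (1 : ℝ)..((n : ℝ) + 1), x ^ k * Real.exp (-(c * x))
      ≤ (k.factorial : ℝ) / c ^ (k + 1) := by
    intro n
    rw [intervalIntegral.integral_of_le (by linarith [Nat.cast_nonneg (α := ℝ) n] : (1 : ℝ) ≤ (n : ℝ) + 1)]
    rw [← hI]
    apply MeasureTheory.setIntegral_mono_set hint
    · refine MeasureTheory.ae_restrict_of_forall_mem measurableSet_Ioi fun x hx => ?_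
      have hx0 : (0 : ℝ) < x := hx
      positivity
    · apply HasSubset.Subset.eventuallyLE
      intro x hx
      exact lt_trans one_pos hx.1
  -- conclude
  apply Real.tsum_le_of_sum_range_le
  · intro l
    have : (0 : ℝ) < R ^ (-((l : ℤ) + 1)) := zpow_pos hR0 _
    positivity
  intro n
  have step : ∑ l ∈ Finset.range n, ((l + 1 : ℝ) ^ k / (k.factorial : ℝ)) * R ^ (-((l : ℤ) + 1))
      ≤ (Real.exp c / (k.factorial : ℝ)) * ∑ l ∈ Finset.range n,
        ∫ x in ((l : ℝ) + 1)..((l : ℝ) + 2), x ^ k * Real.exp (-(c * x)) := by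
    rw [Finset.mul_sum]
    apply Finset.sum_le_sum
    intro l _
    rw [hz l]
    have := key l
    calc ((l + 1 : ℝ) ^ k / (k.factorial : ℝ)) * Real.exp (-(c * ((l : ℝ) + 1)))
        = (((l : ℝ) + 1) ^ k * Real.exp (-(c * ((l : ℝ) + 1)))) / (k.factorial : ℝ) := by
          ring
      _ ≤ (Real.exp c * ∫ x in ((l : ℝ) + 1)..((l : ℝ) + 2),
            x ^ k * Real.exp (-(c * x))) / (k.factorial : ℝ) := by
          gcongr
      _ = Real.exp c / (k.factorial : ℝ) * ∫ x in ((l : ℝ) + 1)..((l : ℝ) + 2),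
            x ^ k * Real.exp (-(c * x)) := by ring
  calc ∑ l ∈ Finset.range n, ((l + 1 : ℝ) ^ k / (k.factorial : ℝ)) * R ^ (-((l : ℤ) + 1))
      ≤ (Real.exp c / (k.factorial : ℝ)) * ∑ l ∈ Finset.range n,
        ∫ x in ((l : ℝ) + 1)..((l : ℝ) + 2), x ^ k * Real.exp (-(c * x)) := step
    _ ≤ (Real.exp c / (k.factorial : ℝ)) * ((k.factorial : ℝ) / c ^ (k + 1)) := by
        apply mul_le_mul_of_nonneg_left _ (by positivity)
        rw [sumI n]
        exact hIb n
    _ = R / c ^ (k + 1) := by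
        rw [← hRe]
        field_simp
end

section
/- For every real φ with 0 < φ < π/2 and every real t ≥ 0, one has e^{−2t sin φ} − 2 e^{−t sin φ} cos(t cos φ) + 1 < (sin φ)^{−2}. -/
theorem h_lt_inv_sin_sq (φ t : ℝ) (hφ₀ : 0 < φ) (hφ₁ : φ < Real.pi / 2) (ht : 0 ≤ t) :
    Real.exp (-2 * t * Real.sin φ) - 2 * Real.exp (-t * Real.sin φ) * Real.cos (t * Real.cos φ) + 1
      < 1 / (Real.sin φ) ^ 2 := by
  set s := Real.sin φ with hs
  have hs0 : 0 < s := Real.sin_pos_of_pos_of_lt_pi hφ₀ (by linarith [Real.pi_pos])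
  set c : ℂ := Complex.I * Complex.exp (φ * Complex.I) with hc
  have hcre : c.re = -s := by
    simp [hc, Complex.mul_re, Complex.exp_ofReal_mul_I_re, Complex.exp_ofReal_mul_I_im, hs]
  have hcim : c.im = Real.cos φ := by
    simp [hc, Complex.mul_im, Complex.exp_ofReal_mul_I_re, Complex.exp_ofReal_mul_I_im]
  have hcnorm : ‖c‖ = 1 := by
    rw [hc, norm_mul, Complex.norm_I,
      Complex.norm_exp]
    simp
  have hderiv : ∀ u : ℝ, HasDerivAt (fun u : ℝ => Complex.exp (u * c))
      (Complex.exp (u * c) * c) u := by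
    intro u
    have h1 : HasDerivAt (fun z : ℂ => Complex.exp (z * c))
        (Complex.exp ((u : ℂ) * c) * c) (u : ℂ) := by
      simpa using ((hasDerivAt_id (u : ℂ)).mul_const c).cexp
    exact h1.comp_ofReal
  have hcont : Continuous (fun u : ℝ => Complex.exp (u * c) * c) := by fun_prop
  have hint : ∫ u in (0:ℝ)..t, Complex.exp (u * c) * c = Complex.exp (t * c) - 1 := by
    have := intervalIntegral.integral_eq_sub_of_hasDerivAt (f := fun u : ℝ => Complex.exp (u * c))
      (fun u _ => hderiv u) (hcont.intervalIntegrable 0 t)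
    simpa using this
  have hnormc : ∀ u : ℝ, ‖Complex.exp ((u : ℂ) * c) * c‖ = Real.exp (-(s * u)) := by
    intro u
    rw [norm_mul, hcnorm, mul_one, Complex.norm_exp]
    congr 1
    simp [Complex.mul_re, hcre]
    ring
  have hint2 : ∫ u in (0:ℝ)..t, Real.exp (-(s * u)) = (1 - Real.exp (-(s * t))) / s := by
    have hd : ∀ u ∈ Set.uIcc (0:ℝ) t, HasDerivAt (fun u : ℝ => -(Real.exp (-(s * u)) / s))
        (Real.exp (-(s * u))) u := by
      intro u _
      have hf : HasDerivAt (fun u : ℝ => -(s * u)) (-s) u := by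
        exact ((hasDerivAt_id u).const_mul s).neg.congr_deriv (by simp)
      have := (hf.exp.div_const s).neg
      exact this.congr_deriv (by field_simp)
    have hci : Continuous (fun u : ℝ => Real.exp (-(s * u))) := by fun_prop
    have := intervalIntegral.integral_eq_sub_of_hasDerivAt hd (hci.intervalIntegrable 0 t)
    rw [this]
    field_simp
    rw [mul_zero, neg_zero, Real.exp_zero]
    ring
  have hbound : ‖Complex.exp ((t : ℂ) * c) - 1‖ ≤ (1 - Real.exp (-(s * t))) / s := by
    rw [← hint]
    calc ‖∫ u in (0:ℝ)..t, Complex.exp ((u : ℂ) * c) * c‖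
        ≤ ∫ u in (0:ℝ)..t, ‖Complex.exp ((u : ℂ) * c) * c‖ :=
          intervalIntegral.norm_integral_le_integral_norm ht
      _ = (1 - Real.exp (-(s * t))) / s := by
          simp only [hnormc]; exact hint2
  have htcre : ((t : ℂ) * c).re = -(t * s) := by
    simp [Complex.mul_re, hcre]
  have htcim : ((t : ℂ) * c).im = t * Real.cos φ := by
    simp [Complex.mul_im, hcim]
  have key : Real.exp (-2 * t * s) - 2 * Real.exp (-t * s) * Real.cos (t * Real.cos φ) + 1
      = ‖Complex.exp ((t : ℂ) * c) - 1‖ ^ 2 := by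
    rw [Complex.sq_norm, Complex.normSq_apply, Complex.sub_re,
      Complex.sub_im, Complex.exp_re, Complex.exp_im, htcre, htcim]
    have e2 : Real.exp (-2 * t * s) = Real.exp (-(t * s)) ^ 2 := by
      rw [sq, ← Real.exp_add]; ring_nf
    have e1 : Real.exp (-t * s) = Real.exp (-(t * s)) := by ring_nf
    rw [e2, e1]
    simp only [Complex.one_re, Complex.one_im]
    nlinarith [Real.sin_sq_add_cos_sq (t * Real.cos φ)]
  rw [key]
  have h1 : 1 - Real.exp (-(s * t)) < 1 := by
    have := Real.exp_pos (-(s * t)); linarith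
  have h0 : 0 ≤ (1 - Real.exp (-(s * t))) / s := by
    apply div_nonneg _ hs0.le
    have : Real.exp (-(s * t)) ≤ 1 := Real.exp_le_one_iff.mpr (by nlinarith)
    linarith
  calc ‖Complex.exp ((t : ℂ) * c) - 1‖ ^ 2
      ≤ ((1 - Real.exp (-(s * t))) / s) ^ 2 := by
        apply pow_le_pow_left₀ (norm_nonneg _) hbound
    _ < (1 / s) ^ 2 := by
        apply pow_lt_pow_left₀ _ h0 (by norm_num)
        gcongr
    _ = 1 / s ^ 2 := by rw [div_pow, one_pow]
end

section
/- For every real u > 0, one has (u²/(1+u²)) · sup_{s ≥ 0} (e^{−2su} − 2 e^{−su} cos s + 1) < 1. -/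
/-!
Write `y = e^{-su} ∈ (0, 1]` and `f = y² - 2y cos s + 1 = (1 - y)² + 2y (1 - cos s)`, and put
`a = u² / (1 + u²)`. Since `1 - cos s ≤ s² / 2` and `t² e^{-t} ≤ (1 - e^{-t})²` (which is
`|t/2| ≤ |sinh (t/2)|`), we get `a f ≤ (1 - y)²`, sharp as `s → 0`; trivially `f ≤ (1 + y)²`,
good as `s → ∞`. Averaging, `a f ≤ a (1 + y)² / 4 + 3 (1 - y)² / 4`, which is convex in `y`
and hence at most `max (a/4 + 3/4) a = (a + 3) / 4 < 1` on `[0, 1]`.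
-/

open Real

theorem sq_mul_exp_neg_le_sq_one_sub_exp_neg (t : ℝ) :
    t ^ 2 * exp (-t) ≤ (1 - exp (-t)) ^ 2 := by
  have hsinh : (t / 2) ^ 2 ≤ sinh (t / 2) ^ 2 := by
    rw [← sq_abs, ← sq_abs (sinh _), abs_sinh]
    gcongr
    exact self_le_sinh_iff.2 (abs_nonneg _)
  have hexp : exp (-t) = exp (-(t / 2)) ^ 2 := by rw [← exp_nat_mul]; ring_nf
  have hhalf : exp (t / 2) * exp (-(t / 2)) = 1 := by rw [← exp_add]; simp
  calc t ^ 2 * exp (-t) ≤ 4 * sinh (t / 2) ^ 2 * exp (-(t / 2)) ^ 2 := by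
        rw [hexp]; gcongr; linarith
    _ = (1 - exp (-t)) ^ 2 := by
        rw [hexp, sinh_eq]
        linear_combination (exp (t / 2) * exp (-(t / 2)) + 1 - 2 * exp (-(t / 2)) ^ 2) * hhalf

theorem div_one_add_sq_mul_exp_sub_cos_le (u s : ℝ) :
    u ^ 2 / (1 + u ^ 2) * (exp (-2 * s * u) - 2 * exp (-s * u) * cos s + 1) ≤
      (1 - exp (-s * u)) ^ 2 := by
  set y := exp (-s * u)
  have hy : exp (-2 * s * u) = y ^ 2 := by rw [← exp_nat_mul]; ring_nf
  have hcos : 1 - s ^ 2 / 2 ≤ cos s := one_sub_sq_div_two_le_cos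
  have hexp : (s * u) ^ 2 * y ≤ (1 - y) ^ 2 := by
    simpa [y, neg_mul] using sq_mul_exp_neg_le_sq_one_sub_exp_neg (s * u)
  rw [hy, div_mul_eq_mul_div, div_le_iff₀ (by positivity)]
  nlinarith [mul_le_mul_of_nonneg_left hcos (by positivity : 0 ≤ 2 * u ^ 2 * y)]

theorem mul_le_of_le_sq_one_sub_of_le_sq_one_add {a x y : ℝ} (ha₀ : 0 ≤ a) (ha₁ : a ≤ 1)
    (hy₀ : 0 ≤ y) (hy₁ : y ≤ 1) (h₁ : a * x ≤ (1 - y) ^ 2) (h₂ : x ≤ (1 + y) ^ 2) :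
    a * x ≤ (a + 3) / 4 := by
  have h₂' : a * x ≤ a * (1 + y) ^ 2 := mul_le_mul_of_nonneg_left h₂ ha₀
  nlinarith [mul_nonneg hy₀ (sub_nonneg.2 hy₁), mul_nonneg ha₀ hy₀, mul_nonneg (sub_nonneg.2 ha₁) hy₀]

theorem substituted_sup_inequality (u : ℝ) (hu : 0 < u) :
    (u ^ 2 / (1 + u ^ 2)) *
      (⨆ s : Set.Ici (0 : ℝ),
        Real.exp (-2 * (s : ℝ) * u) - 2 * Real.exp (-(s : ℝ) * u) * Real.cos (s : ℝ) + 1) < 1 := by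
  set a := u ^ 2 / (1 + u ^ 2)
  have ha₀ : 0 ≤ a := by positivity
  have ha₁ : a < 1 := (div_lt_one (by positivity)).2 (by linarith)
  rw [Real.mul_iSup_of_nonneg ha₀]
  refine (ciSup_le fun s => ?_).trans_lt (by linarith : (a + 3) / 4 < 1)
  set y := exp (-s * u)
  have hsu : 0 ≤ (s : ℝ) * u := mul_nonneg s.2 hu.le
  have hy₁ : y ≤ 1 := exp_le_one_iff.2 (by linarith)
  have hy : exp (-2 * s * u) = y ^ 2 := by rw [← exp_nat_mul]; ring_nf
  refine mul_le_of_le_sq_one_sub_of_le_sq_one_add ha₀ ha₁.le (exp_pos _).le hy₁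
    (div_one_add_sq_mul_exp_sub_cos_le u s) ?_
  rw [hy]
  nlinarith [neg_one_le_cos (s : ℝ), exp_pos (-s * u)]
end

section
/- Let D₀ > 0, R > 0, μ₀ > 0, and let u : [0, ∞) → [0, ∞) be a differentiable function with u(0) < μ₀ R/(D₀ + μ₀), u(t) > 0 for all t, and satisfying the differential inequality (d/dt) u(t)² ≤ 2(−μ₀ + D₀ u(t)/(R − u(t))) u(t)² whenever u(t) < R. Then for all t ≥ 0: u(t) ≤ u(0) and u(t) ≤ u(0) exp(−(μ₀ − D₀ u(0)/(R − u(0))) t); in particular u(t) → 0 as t → ∞. -/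
/-!
Put `c = μ₀ - D₀ u(0) / (R - u(0)) > 0`. Since `D₀ u / (R - u)` increases with `u`, the
differential inequality gives `(u²)' ≤ -2c u²` wherever `u ≤ u(0)`. In particular `(u²)' < 0` at
every time where `u` is back at the level `u(0)`, so `u` never rises above `u(0)`; the bound
`(u²)' ≤ -2c u²` then holds for all `t ≥ 0`, and Grönwall gives `u(t)² ≤ u(0)² e^{-2ct}`.
-/

open Filter Topology Real

theorem le_apply_of_deriv_neg_of_eq {f : ℝ → ℝ} {a : ℝ} (hf : Differentiable ℝ f)
    (h : ∀ x, a ≤ x → f x = f a → deriv f x < 0) {x : ℝ} (hx : a ≤ x) : f x ≤ f a :=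
  image_le_of_deriv_right_lt_deriv_boundary' (B := fun _ => f a) (B' := fun _ => 0)
    hf.continuous.continuousOn (fun y _ => (hf y).hasDerivAt.hasDerivWithinAt) le_rfl
    continuousOn_const (fun _ _ => hasDerivWithinAt_const _ _ _) (fun y hy => h y hy.1)
    ⟨hx, le_rfl⟩

theorem le_mul_exp_of_deriv_le_mul {f : ℝ → ℝ} {a K : ℝ} (hf : Differentiable ℝ f)
    (h : ∀ x, a ≤ x → deriv f x ≤ K * f x) {x : ℝ} (hx : a ≤ x) :
    f x ≤ f a * exp (K * (x - a)) := by
  have := le_gronwallBound_of_liminf_deriv_right_le (K := K) (ε := 0) hf.continuous.continuousOn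
    (fun y _ r hr => (hf y).hasDerivAt.hasDerivWithinAt.liminf_right_slope_le hr) le_rfl
    (fun y hy => (h y hy.1).trans_eq (add_zero _).symm) x ⟨hx, le_rfl⟩
  rwa [gronwallBound_ε0] at this

theorem le_mul_exp_neg_of_deriv_sq_le {u : ℝ → ℝ} {c : ℝ} (hu : Differentiable ℝ u)
    (hc : 0 < c) (hpos : ∀ t, 0 ≤ t → 0 < u t)
    (h : ∀ t, 0 ≤ t → u t ≤ u 0 → deriv (fun t => u t ^ 2) t ≤ -2 * c * u t ^ 2)
    {t : ℝ} (ht : 0 ≤ t) : u t ≤ u 0 * exp (-c * t) := by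
  have hu0 : 0 < u 0 := hpos 0 le_rfl
  have hsq : Differentiable ℝ (fun t => u t ^ 2) := hu.pow 2
  have hlevel : ∀ x, 0 ≤ x → u x ^ 2 = u 0 ^ 2 → deriv (fun t => u t ^ 2) x < 0 := by
    intro x hx hx0
    rw [pow_left_inj₀ (hpos x hx).le hu0.le two_ne_zero] at hx0
    refine (h x hx hx0.le).trans_lt ?_
    rw [hx0]
    exact mul_neg_of_neg_of_pos (by linarith) (pow_pos hu0 2)
  have hle : ∀ x, 0 ≤ x → u x ≤ u 0 := fun x hx =>
    (pow_le_pow_iff_left₀ (hpos x hx).le hu0.le two_ne_zero).1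
      (le_apply_of_deriv_neg_of_eq hsq hlevel hx)
  have hgron := le_mul_exp_of_deriv_le_mul hsq (fun x hx => h x hx (hle x hx)) ht
  have hexp : exp (-2 * c * (t - 0)) = exp (-c * t) ^ 2 := by
    rw [← exp_nat_mul]
    ring_nf
  rw [hexp, ← mul_pow] at hgron
  exact (pow_le_pow_iff_left₀ (hpos t ht).le (by positivity) two_ne_zero).1 hgron

theorem lt_of_lt_mul_div_add {D R μ x : ℝ} (hD : 0 ≤ D) (hμ : 0 < μ) (hx : 0 ≤ x)
    (h : x < μ * R / (D + μ)) : x < R := by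
  rw [lt_div_iff₀ (by positivity)] at h
  nlinarith

theorem mul_div_sub_lt_of_lt_mul_div_add {D R μ x : ℝ} (hD : 0 ≤ D) (hμ : 0 < μ) (hx : 0 ≤ x)
    (h : x < μ * R / (D + μ)) : D * x / (R - x) < μ := by
  rw [div_lt_iff₀ (sub_pos.2 (lt_of_lt_mul_div_add hD hμ hx h))]
  rw [lt_div_iff₀ (by positivity)] at h
  linarith

theorem gronwall_decay_lemma_general (D₀ R μ₀ : ℝ) (hD : 0 < D₀) (hμ : 0 < μ₀)
    (u : ℝ → ℝ) (hdiff : Differentiable ℝ u)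
    (h0 : u 0 < μ₀ * R / (D₀ + μ₀))
    (hpos : ∀ t, 0 ≤ t → 0 < u t)
    (hineq : ∀ t, 0 ≤ t → u t < R →
      deriv (fun t => (u t) ^ 2) t ≤ 2 * (-μ₀ + D₀ * u t / (R - u t)) * (u t) ^ 2) :
    (∀ t, 0 ≤ t → u t ≤ u 0 ∧
        u t ≤ u 0 * Real.exp (-(μ₀ - D₀ * u 0 / (R - u 0)) * t)) ∧
      Tendsto u atTop (nhds 0) := by
  have hu0 : 0 < u 0 := hpos 0 le_rfl
  have hu0R : u 0 < R := lt_of_lt_mul_div_add hD.le hμ hu0.le h0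
  have hc : 0 < μ₀ - D₀ * u 0 / (R - u 0) :=
    sub_pos.2 (mul_div_sub_lt_of_lt_mul_div_add hD.le hμ hu0.le h0)
  have hdecay : ∀ t, 0 ≤ t → u t ≤ u 0 * exp (-(μ₀ - D₀ * u 0 / (R - u 0)) * t) :=
    fun t ht => le_mul_exp_neg_of_deriv_sq_le hdiff hc hpos (fun s hs hs0 => by
      have hrate : D₀ * u s / (R - u s) ≤ D₀ * u 0 / (R - u 0) := by gcongr
      have := mul_le_mul_of_nonneg_right hrate (sq_nonneg (u s))
      linarith [hineq s hs (hs0.trans_lt hu0R)]) ht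
  have hlim : Tendsto (fun t => u 0 * exp (-(μ₀ - D₀ * u 0 / (R - u 0)) * t)) atTop (𝓝 0) := by
    simpa using (tendsto_exp_atBot.comp
      (tendsto_id.const_mul_atTop_of_neg (neg_neg_of_pos hc))).const_mul (u 0)
  refine ⟨fun t ht => ⟨(hdecay t ht).trans ?_, hdecay t ht⟩, ?_⟩
  · exact mul_le_of_le_one_right hu0.le (exp_le_one_iff.2
      (mul_nonpos_of_nonpos_of_nonneg (neg_nonpos.2 hc.le) ht))
  · exact squeeze_zero' (eventually_atTop.2 ⟨0, fun t ht => (hpos t ht).le⟩)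
      (eventually_atTop.2 ⟨0, hdecay⟩) hlim

theorem gronwall_decay_lemma (D₀ R μ₀ : ℝ) (hD : 0 < D₀) (hR : 0 < R) (hμ : 0 < μ₀)
    (u : ℝ → ℝ) (hdiff : Differentiable ℝ u)
    (h0 : u 0 < μ₀ * R / (D₀ + μ₀))
    (hpos : ∀ t, 0 ≤ t → 0 < u t)
    (hineq : ∀ t, 0 ≤ t → u t < R →
      deriv (fun t => (u t) ^ 2) t ≤ 2 * (-μ₀ + D₀ * u t / (R - u t)) * (u t) ^ 2) :
    (∀ t, 0 ≤ t → u t ≤ u 0 ∧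
        u t ≤ u 0 * Real.exp (-(μ₀ - D₀ * u 0 / (R - u 0)) * t)) ∧
      Tendsto u atTop (nhds 0) :=
  gronwall_decay_lemma_general D₀ R μ₀ hD hμ u hdiff h0 hpos hineq
end

section
/- Let D₀ > 0 and R > e, and suppose w : [0, T] → ℂ^d is continuous with ‖w(t)‖_∞ ≤ ‖w(0)‖_∞ + (D₀/(1 − M₀/R)) ∫₀^t ‖w(s)‖_∞ ds on any interval where ‖w‖_∞ ≤ M₀, where M₀ = ‖w(0)‖_∞^{(e−1)/(2e−1)} (R/e)^{e/(2e−1)} and 0 < ‖w(0)‖_∞ < R/e. Then ‖w(t)‖_∞ ≤ M₀ < R/e for all 0 ≤ t ≤ T* where T* = ((e−1)/(D₀(2e−1)))·(ln R − ln ‖w(0)‖_∞ − 1). -/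
theorem short_time_bound_lemma (d : ℕ) (D₀ R T : ℝ) (hD : 0 < D₀) (hR : Real.exp 1 < R)
    (w : ℝ → (Fin d → ℂ)) (hw : Continuous w)
    (h0 : 0 < ‖w 0‖) (h0' : ‖w 0‖ < R / Real.exp 1)
    (M₀ : ℝ)
    (hM : M₀ = ‖w 0‖ ^ ((Real.exp 1 - 1) / (2 * Real.exp 1 - 1)) *
      (R / Real.exp 1) ^ (Real.exp 1 / (2 * Real.exp 1 - 1)))
    (hineq : ∀ t ∈ Set.Icc (0 : ℝ) T, (∀ s ∈ Set.Icc (0 : ℝ) t, ‖w s‖ ≤ M₀) →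
      ‖w t‖ ≤ ‖w 0‖ + D₀ / (1 - M₀ / R) * ∫ s in (0 : ℝ)..t, ‖w s‖) :
    M₀ < R / Real.exp 1 ∧
      ∀ t, 0 ≤ t → t ≤ T →
        t ≤ (Real.exp 1 - 1) / (D₀ * (2 * Real.exp 1 - 1)) *
              (Real.log R - Real.log ‖w 0‖ - 1) →
          ‖w t‖ ≤ M₀ := by
  have hE1 : (1 : ℝ) < Real.exp 1 := by
    have := Real.exp_one_gt_d9; linarith
  set E := Real.exp 1 with hEdef
  have hEpos : (0 : ℝ) < E := by linarith
  set a := ‖w 0‖ with hadef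
  set α := (E - 1) / (2 * E - 1) with hαdef
  have hden : (0 : ℝ) < 2 * E - 1 := by linarith
  have hαpos : 0 < α := div_pos (by linarith) hden
  have hα1 : α < 1 := by
    rw [hαdef, div_lt_one hden]; linarith
  have h1α : 1 - α = E / (2 * E - 1) := by
    rw [hαdef, eq_div_iff hden.ne', sub_mul, div_mul_cancel₀ _ hden.ne']; ring
  have hRpos : 0 < R := by linarith
  set b := R / E with hbdef
  have hbpos : 0 < b := by positivity
  have hab : a < b := h0'
  -- M₀ facts
  have hM0pos : 0 < M₀ := by
    rw [hM]; positivity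
  have haM : a ≤ M₀ := by
    have h2 : a = a ^ α * a ^ (E / (2 * E - 1)) := by
      rw [← Real.rpow_add h0]
      rw [show α + E / (2 * E - 1) = 1 by rw [← h1α]; ring, Real.rpow_one]
    rw [hM, ← h1α] at *
    calc a = a ^ α * a ^ (1 - α) := by rw [h1α]; exact h2
    _ ≤ a ^ α * b ^ (1 - α) := by
        apply mul_le_mul_of_nonneg_left _ (by positivity)
        exact Real.rpow_le_rpow h0.le hab.le (by linarith)
  have hM0b : M₀ < b := by
    have h3 : a ^ α < b ^ α := Real.rpow_lt_rpow h0.le hab hαpos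
    have h4 : b ^ α * b ^ (E / (2 * E - 1)) = b := by
      rw [← Real.rpow_add hbpos,
        show α + E / (2 * E - 1) = 1 by rw [← h1α]; ring, Real.rpow_one]
    calc M₀ = a ^ α * b ^ (E / (2 * E - 1)) := hM
    _ < b ^ α * b ^ (E / (2 * E - 1)) :=
        mul_lt_mul_of_pos_right h3 (by positivity)
    _ = b := h4
  have hM0R : M₀ < R := by
    have : b < R := by
      rw [hbdef, div_lt_iff₀ hEpos]; nlinarith
    linarith
  -- constants
  set u := 1 - M₀ / R with hudef
  have hupos : 0 < u := by
    rw [hudef]; have : M₀ / R < 1 := (div_lt_one hRpos).mpr hM0R; linarith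
  have hu' : (E - 1) / E < u := by
    have h5 : M₀ / R < 1 / E := by
      rw [div_lt_div_iff₀ hRpos hEpos]
      rw [hbdef] at hM0b
      calc M₀ * E < (R / E) * E := by nlinarith
      _ = R := by field_simp
      _ = 1 * R := by ring
    rw [hudef]
    have h6 : (E - 1) / E = 1 - 1 / E := by field_simp
    linarith [h5, h6.le, h6.ge]
  set C := D₀ / u with hCdef
  have hCpos : 0 < C := by positivity
  -- logs
  have hlogb : Real.log b = Real.log R - 1 := by
    rw [hbdef, Real.log_div (by linarith) (by linarith), hEdef, Real.log_exp]
  set L := Real.log R - Real.log a - 1 with hLdef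
  have hL : 0 < L := by
    have := Real.log_lt_log h0 hab
    rw [hlogb] at this; rw [hLdef]; linarith
  have hlogM : Real.log M₀ - Real.log a = E / (2 * E - 1) * L := by
    have h7 : Real.log M₀ = α * Real.log a + (E / (2 * E - 1)) * Real.log b := by
      rw [hM, Real.log_mul (by positivity) (by positivity),
        Real.log_rpow h0, Real.log_rpow hbpos]
    rw [h7, hlogb, hLdef, hαdef]
    have h1α' : 1 - (E - 1) / (2 * E - 1) = E / (2 * E - 1) := h1α
    linear_combination (-Real.log a) * h1α'
  -- T* inequality: for τ ≤ T*, C * τ < log M₀ - log a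
  set Tstar := (E - 1) / (D₀ * (2 * E - 1)) * L with hTdef
  have hkey : C * Tstar < Real.log M₀ - Real.log a := by
    rw [hlogM]
    have h8 : C * Tstar = (E - 1) / u * (L / (2 * E - 1)) := by
      rw [hCdef, hTdef]; field_simp
    have h9 : (E - 1) / u < E := by
      rw [div_lt_iff₀ hupos]
      have := (div_lt_iff₀ hEpos).mp hu'
      nlinarith
    have h10 : 0 < L / (2 * E - 1) := by positivity
    calc C * Tstar = (E - 1) / u * (L / (2 * E - 1)) := h8
    _ < E * (L / (2 * E - 1)) := mul_lt_mul_of_pos_right h9 h10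
    _ = E / (2 * E - 1) * L := by ring
  -- Gronwall
  have gron : ∀ t, 0 ≤ t → t ≤ T → (∀ s ∈ Set.Icc (0 : ℝ) t, ‖w s‖ ≤ M₀) →
      ‖w t‖ ≤ a * Real.exp (C * t) := by
    intro t ht htT hbound
    set F : ℝ → ℝ := fun x => ∫ s in (0 : ℝ)..x, ‖w s‖ with hFdef
    have hFderiv : ∀ x, HasDerivAt F (‖w x‖) x := fun x =>
      ((hw.norm).integral_hasStrictDerivAt 0 x).hasDerivAt
    have hFnonneg : ∀ x, 0 ≤ x → 0 ≤ F x := fun x hx =>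
      intervalIntegral.integral_nonneg hx (fun s _ => norm_nonneg _)
    have hwle : ∀ x ∈ Set.Icc (0 : ℝ) t, ‖w x‖ ≤ a + C * F x := by
      intro x hx
      exact hineq x ⟨hx.1, hx.2.trans htT⟩
        (fun s hs => hbound s ⟨hs.1, hs.2.trans hx.2⟩)
    have hgb := norm_le_gronwallBound_of_norm_deriv_right_le
      (f := F) (f' := fun x => ‖w x‖) (δ := 0) (K := C) (ε := a) (a := 0) (b := t)
      (fun x _ => (hFderiv x).continuousAt.continuousWithinAt)
      (fun x _ => (hFderiv x).hasDerivWithinAt)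
      (by simp [hFdef])
      (by
        intro x hx
        have h11 := hwle x ⟨hx.1, hx.2.le⟩
        simp only [Real.norm_eq_abs]
        rw [abs_of_nonneg (norm_nonneg _), abs_of_nonneg (hFnonneg x hx.1)]
        linarith)
    have h13 := hgb t ⟨ht, le_refl t⟩
    rw [gronwallBound_of_K_ne_0 (ne_of_gt hCpos)] at h13
    simp only [sub_zero, zero_mul, zero_add] at h13
    rw [Real.norm_eq_abs, abs_of_nonneg (hFnonneg t ht)] at h13
    have h15 := hwle t ⟨ht, le_refl t⟩
    have h16 : a + C * (a / C * (Real.exp (C * t) - 1)) = a * Real.exp (C * t) := by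
      field_simp; ring
    have h19 : C * F t ≤ C * (a / C * (Real.exp (C * t) - 1)) :=
      mul_le_mul_of_nonneg_left h13 hCpos.le
    linarith
  refine ⟨hM0b, fun t ht htT htstar => ?_⟩
  have main : ∀ s ∈ Set.Icc (0 : ℝ) t, ‖w s‖ ≤ M₀ := by
    by_contra hcon
    push_neg at hcon
    obtain ⟨s₀, hs₀, hs₀'⟩ := hcon
    set B := {s ∈ Set.Icc (0 : ℝ) t | M₀ < ‖w s‖} with hBdef
    have hBne : B.Nonempty := ⟨s₀, hs₀, hs₀'⟩
    have hBbd : BddBelow B := ⟨0, fun x hx => hx.1.1⟩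
    set τ := sInf B with hτdef
    have hτcl : τ ∈ closure B := csInf_mem_closure hBne hBbd
    have hτmem : τ ∈ Set.Icc (0 : ℝ) t :=
      closure_minimal (fun x hx => hx.1) isClosed_Icc hτcl
    have hτge : M₀ ≤ ‖w τ‖ :=
      closure_minimal (fun x hx => le_of_lt hx.2)
        (isClosed_le continuous_const hw.norm) hτcl
    have hlow : ∀ s ∈ Set.Ico (0 : ℝ) τ, ‖w s‖ ≤ M₀ := by
      intro s hs
      by_contra h''
      push_neg at h''
      exact absurd (csInf_le hBbd ⟨⟨hs.1, hs.2.le.trans hτmem.2⟩, h''⟩)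
        (not_le.mpr hs.2)
    have hτbd : ∀ s ∈ Set.Icc (0 : ℝ) τ, ‖w s‖ ≤ M₀ := by
      intro s hs
      rcases lt_or_eq_of_le hs.2 with h | heq
      · exact hlow s ⟨hs.1, h⟩
      · rcases eq_or_lt_of_le hs.1 with h0s | h0s
        · rw [← h0s]; exact haM
        · have hclo : s ∈ closure (Set.Ico (0 : ℝ) s) := by
            rw [closure_Ico (ne_of_lt h0s)]
            exact ⟨h0s.le, le_refl s⟩
          exact closure_minimal
            (fun x hx => hlow x ⟨hx.1, lt_of_lt_of_le hx.2 hs.2⟩)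
            (isClosed_le hw.norm continuous_const) hclo
    have hbig := gron τ hτmem.1 (hτmem.2.trans htT) hτbd
    have hCτ : C * τ < Real.log M₀ - Real.log a := by
      have : τ ≤ Tstar := hτmem.2.trans htstar
      calc C * τ ≤ C * Tstar := mul_le_mul_of_nonneg_left this hCpos.le
      _ < _ := hkey
    have hfin : a * Real.exp (C * τ) < M₀ := by
      have h17 : Real.exp (C * τ) < Real.exp (Real.log M₀ - Real.log a) :=
        Real.exp_lt_exp.mpr hCτ
      have h18 : Real.exp (Real.log M₀ - Real.log a) = M₀ / a := by
        rw [Real.exp_sub, Real.exp_log hM0pos, Real.exp_log h0]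
      calc a * Real.exp (C * τ) < a * (M₀ / a) := by
            rw [← h18]; exact mul_lt_mul_of_pos_left h17 h0
      _ = M₀ := by field_simp
    linarith
  exact main t ⟨ht, le_refl t⟩
end

section
/- Let D₀ > 0, N ≥ 2, and let U₁,…,U_N : [0, ∞) → [0, ∞) be continuous functions satisfying 0 ≤ U_k(t) ≤ D₀ k ∫₀^t e^{D₀ k (t−s)} (∑_{l=k+1}^N U_l(s) + 1) ds for all t ≥ 0 and 1 ≤ k ≤ N. Then U₂(t) + ⋯ + U_N(t) + 1 ≤ (N^{N−2}/(N−2)!) e^{D₀ N t} for all t ≥ 0. -/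
lemma my_int_exp (m t : ℝ) (hm : m ≠ 0) :
    ∫ s in (0:ℝ)..t, Real.exp (m * s) = (Real.exp (m * t) - 1) / m := by
  have hd : ∀ s ∈ Set.uIcc (0:ℝ) t,
      HasDerivAt (fun x => Real.exp (m * x) / m) (Real.exp (m * s)) s := by
    intro s _
    have h1 : HasDerivAt (fun x : ℝ => m * x) m s := by
      simpa using (hasDerivAt_id s).const_mul m
    have h2 := ((Real.hasDerivAt_exp (m * s)).comp s h1).div_const m
    rw [mul_div_cancel_right₀ _ hm] at h2
    exact h2
  have hi : IntervalIntegrable (fun s => Real.exp (m * s)) MeasureTheory.volume 0 t :=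
    (Real.continuous_exp.comp (continuous_const.mul continuous_id)).intervalIntegrable 0 t
  rw [intervalIntegral.integral_eq_sub_of_hasDerivAt hd hi]
  rw [mul_zero, Real.exp_zero]
  ring

lemma my_conv_int (a b t : ℝ) (hab : b ≠ a) :
    ∫ s in (0:ℝ)..t, Real.exp (a * (t - s)) * Real.exp (b * s)
      = (Real.exp (b * t) - Real.exp (a * t)) / (b - a) := by
  have h : ∀ s : ℝ, Real.exp (a * (t - s)) * Real.exp (b * s)
      = Real.exp (a * t) * Real.exp ((b - a) * s) := by
    intro s
    rw [← Real.exp_add, ← Real.exp_add]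
    ring_nf
  simp_rw [h]
  rw [intervalIntegral.integral_const_mul, my_int_exp (b - a) t (sub_ne_zero.mpr hab)]
  have hne : b - a ≠ 0 := sub_ne_zero.mpr hab
  rw [mul_div_assoc'] -- hope: x * (y / z) = x * y / z
  congr 1
  rw [mul_sub, ← Real.exp_add, mul_one]
  ring_nf

theorem recursive_gronwall_lemma (D₀ : ℝ) (hD : 0 < D₀) (N : ℕ) (hN : 2 ≤ N)
    (U : ℕ → ℝ → ℝ) (hcont : ∀ k, Continuous (U k))
    (hnonneg : ∀ k t, 0 ≤ t → 0 ≤ U k t)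
    (hineq : ∀ k, 1 ≤ k → k ≤ N → ∀ t, 0 ≤ t →
      U k t ≤ D₀ * k * ∫ s in (0 : ℝ)..t,
        Real.exp (D₀ * k * (t - s)) * ((∑ l ∈ Finset.Icc (k + 1) N, U l s) + 1)) :
    ∀ t, 0 ≤ t →
      (∑ k ∈ Finset.Icc 2 N, U k t) + 1 ≤
        ((N : ℝ) ^ (N - 2) / ((N - 2).factorial : ℝ)) * Real.exp (D₀ * N * t) := by
  have hNpos : (0:ℝ) < (N:ℝ) := by
    have : (0:ℕ) < N := by omega
    exact_mod_cast this
  have key : ∀ d : ℕ, d ≤ N - 2 → ∀ t : ℝ, 0 ≤ t →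
      (∑ l ∈ Finset.Icc (N - d) N, U l t) + 1 ≤
        ((N : ℝ) ^ d / (d.factorial : ℝ)) * Real.exp (D₀ * N * t) := by
    intro d
    induction d with
    | zero =>
      intro _ t ht
      simp only [Nat.sub_zero, Finset.Icc_self, Finset.sum_singleton, pow_zero,
        Nat.factorial_zero, Nat.cast_one]
      have h := hineq N (by omega) le_rfl t ht
      have hempty : Finset.Icc (N + 1) N = ∅ := by
        apply Finset.Icc_eq_empty; omega
      rw [hempty] at h
      simp only [Finset.sum_empty, zero_add, mul_one] at h
      have hcpos : (0:ℝ) < D₀ * N := by positivity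
      have hcalc : (∫ s in (0:ℝ)..t, Real.exp (D₀ * N * (t - s)))
          = (Real.exp ((0:ℝ) * t) - Real.exp (D₀ * N * t)) / (0 - D₀ * N) := by
        rw [← my_conv_int (D₀ * (N:ℝ)) 0 t (ne_of_lt hcpos)]
        congr 1
        ext s
        rw [zero_mul, Real.exp_zero, mul_one]
      rw [hcalc] at h
      have heq : D₀ * N * ((Real.exp ((0:ℝ) * t) - Real.exp (D₀ * N * t)) / (0 - D₀ * N))
          = Real.exp (D₀ * N * t) - 1 := by
        rw [zero_mul, Real.exp_zero]
        field_simp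
        ring
      rw [heq] at h
      rw [div_one, one_mul]
      linarith
    | succ d ih =>
      intro hdle t ht
      have hd2 : d ≤ N - 2 := by omega
      set k := N - (d + 1) with hk
      have hk2 : 2 ≤ k := by omega
      have hkN : k ≤ N := by omega
      have hkd : k + (d + 1) = N := by omega
      have hNd : N - d = k + 1 := by omega
      have hsplit : Finset.Icc k N = insert k (Finset.Icc (k + 1) N) := by
        ext x; simp only [Finset.mem_Icc, Finset.mem_insert]; omega
      have hnotmem : k ∉ Finset.Icc (k + 1) N := by simp
      rw [hsplit, Finset.sum_insert hnotmem]
      set c := D₀ * (N:ℝ) with hc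
      set a := D₀ * (k:ℝ) with ha
      have hkR : (k:ℝ) + ((d:ℝ) + 1) = (N:ℝ) := by exact_mod_cast hkd
      have hkRpos : (0:ℝ) < (k:ℝ) := by
        have : (0:ℕ) < k := by omega
        exact_mod_cast this
      have hapos : 0 < a := by rw [ha]; positivity
      have hca : c - a = D₀ * ((d:ℝ) + 1) := by
        rw [hc, ha, ← hkR]; ring
      have hcapos : 0 < c - a := by rw [hca]; positivity
      set C := (N:ℝ) ^ d / (d.factorial : ℝ) with hC
      have hCpos : 0 < C := by
        rw [hC]
        have : (0:ℝ) < (d.factorial : ℝ) := by exact_mod_cast d.factorial_pos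
        positivity
      have ihh := ih hd2
      rw [hNd] at ihh
      have hU := hineq k (by omega) hkN t ht
      rw [← ha] at hU
      -- continuity of the two integrands
      have hcont1 : Continuous (fun s : ℝ =>
          Real.exp (a * (t - s)) * ((∑ l ∈ Finset.Icc (k + 1) N, U l s) + 1)) := by
        apply Continuous.mul
        · exact Real.continuous_exp.comp (continuous_const.mul (continuous_const.sub continuous_id))
        · exact (continuous_finset_sum _ fun l _ => hcont l).add continuous_const
      have hcont2 : Continuous (fun s : ℝ =>
          Real.exp (a * (t - s)) * (C * Real.exp (c * s))) := by
        apply Continuous.mul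
        · exact Real.continuous_exp.comp (continuous_const.mul (continuous_const.sub continuous_id))
        · exact continuous_const.mul
            (Real.continuous_exp.comp (continuous_const.mul continuous_id))
      have hmono : (∫ s in (0:ℝ)..t,
            Real.exp (a * (t - s)) * ((∑ l ∈ Finset.Icc (k + 1) N, U l s) + 1))
          ≤ ∫ s in (0:ℝ)..t, Real.exp (a * (t - s)) * (C * Real.exp (c * s)) := by
        apply intervalIntegral.integral_mono_on ht
          (hcont1.intervalIntegrable 0 t) (hcont2.intervalIntegrable 0 t)
        intro s hs
        have hihs := ihh s hs.1
        have hexp : 0 ≤ Real.exp (a * (t - s)) := (Real.exp_pos _).le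
        exact mul_le_mul_of_nonneg_left hihs hexp
      have hRHS : (∫ s in (0:ℝ)..t, Real.exp (a * (t - s)) * (C * Real.exp (c * s)))
          = C * ((Real.exp (c * t) - Real.exp (a * t)) / (c - a)) := by
        have e : ∀ s : ℝ, Real.exp (a * (t - s)) * (C * Real.exp (c * s))
            = C * (Real.exp (a * (t - s)) * Real.exp (c * s)) := fun s => by ring
        simp_rw [e]
        rw [intervalIntegral.integral_const_mul, my_conv_int a c t (ne_of_gt (by linarith))]
      rw [hRHS] at hmono
      have hUb : U k t ≤ a * (C * ((Real.exp (c * t) - Real.exp (a * t)) / (c - a))) := by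
        calc U k t ≤ a * ∫ s in (0:ℝ)..t,
              Real.exp (a * (t - s)) * ((∑ l ∈ Finset.Icc (k + 1) N, U l s) + 1) := hU
          _ ≤ a * (C * ((Real.exp (c * t) - Real.exp (a * t)) / (c - a))) :=
              mul_le_mul_of_nonneg_left hmono hapos.le
      have hSt := ihh t ht
      have hE : (0:ℝ) < Real.exp (c * t) := Real.exp_pos _
      have hA : (0:ℝ) < Real.exp (a * t) := Real.exp_pos _
      have hfac : ((d.factorial : ℕ) : ℝ) ≠ 0 := by
        exact_mod_cast d.factorial_pos.ne'
      have hd1 : ((d:ℝ) + 1) ≠ 0 := by positivity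
      have hUb2 : U k t ≤ (k:ℝ) * C * Real.exp (c * t) / ((d:ℝ) + 1) := by
        have h1 : Real.exp (c * t) - Real.exp (a * t) ≤ Real.exp (c * t) := by linarith
        have h2 : (Real.exp (c * t) - Real.exp (a * t)) / (c - a)
            ≤ Real.exp (c * t) / (c - a) := by
          apply div_le_div_of_nonneg_right h1 hcapos.le
        calc U k t ≤ a * (C * ((Real.exp (c * t) - Real.exp (a * t)) / (c - a))) := hUb
          _ ≤ a * (C * (Real.exp (c * t) / (c - a))) :=
              mul_le_mul_of_nonneg_left (mul_le_mul_of_nonneg_left h2 hCpos.le) hapos.le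
          _ = (k:ℝ) * C * Real.exp (c * t) / ((d:ℝ) + 1) := by
              rw [ha, hca]
              field_simp
      have hRHSeq : (N:ℝ) ^ (d + 1) / (((d + 1).factorial : ℕ) : ℝ) * Real.exp (c * t)
          = (k:ℝ) * C * Real.exp (c * t) / ((d:ℝ) + 1) + C * Real.exp (c * t) := by
        rw [hC, pow_succ, Nat.factorial_succ]
        push_cast
        rw [← hkR]
        field_simp
      have hSt := ihh t ht
      rw [hRHSeq]
      linarith
  have hfin := key (N - 2) le_rfl
  have h2 : N - (N - 2) = 2 := by omega
  rw [h2] at hfin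
  exact hfin
end

section
/- For all real R > e, D₀ > 0, and all t with 0 ≤ t ≤ (e−1)(ln R − 1)/(2D₀(2e−1)), one has (1 + √(2D₀ t))²/R ≤ exp(2D₀ t − (e−1)(ln R − 1)/(2e−1)). -/
/-! Writing `u = √(2 D₀ t)`, one has `(1 + u)² ≤ exp (2u) ≤ exp (u² + 1)` by `1 + u ≤ exp u` and
`2u ≤ u² + 1`. Since `(e - 1)/(2e - 1) ≤ 1` and `log R ≥ 1`, the subtracted constant is at most
`log R - 1`, so `exp (u² + 1) ≤ R · exp (2 D₀ t - (e - 1)(log R - 1)/(2e - 1))`. -/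

open Real

lemma one_add_sq_le_exp_two_mul {u : ℝ} (hu : -1 ≤ u) : (1 + u) ^ 2 ≤ exp (2 * u) := by
  calc (1 + u) ^ 2 ≤ exp u ^ 2 := by
        gcongr
        · linarith
        · linarith [add_one_le_exp u]
    _ = exp (2 * u) := by rw [← exp_nat_mul]; norm_num

lemma one_add_sqrt_sq_div_le_exp_sub {R x c : ℝ} (hR : 0 < R) (hx : 0 ≤ x)
    (hc : c ≤ log R - 1) : (1 + √x) ^ 2 / R ≤ exp (x - c) := by
  have hsq : √x ^ 2 = x := sq_sqrt hx
  rw [div_le_iff₀ hR, ← exp_log hR, ← exp_add]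
  calc (1 + √x) ^ 2 ≤ exp (2 * √x) := one_add_sq_le_exp_two_mul (by linarith [sqrt_nonneg x])
    _ ≤ exp (x - c + log R) := by
        gcongr
        nlinarith [sq_nonneg (√x - 1)]

theorem rate_comparison_real_complex_general (R D₀ t : ℝ) (hR : Real.exp 1 < R) (hD : 0 < D₀)
    (ht₀ : 0 ≤ t) :
    (1 + Real.sqrt (2 * D₀ * t)) ^ 2 / R ≤
      Real.exp (2 * D₀ * t - (Real.exp 1 - 1) * (Real.log R - 1) / (2 * Real.exp 1 - 1)) := by
  have hR₀ : 0 < R := (exp_pos 1).trans hR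
  have hlog : 1 ≤ log R := ((lt_log_iff_exp_lt hR₀).mpr hR).le
  have he : 1 < exp 1 := one_lt_exp_iff.mpr one_pos
  refine one_add_sqrt_sq_div_le_exp_sub hR₀ (by positivity) ?_
  rw [mul_div_right_comm]
  exact mul_le_of_le_one_left (sub_nonneg.mpr hlog) ((div_le_one (by linarith)).mpr (by linarith))

theorem rate_comparison_real_complex (R D₀ t : ℝ) (hR : Real.exp 1 < R) (hD : 0 < D₀)
    (ht₀ : 0 ≤ t)
    (ht₁ : t ≤ (Real.exp 1 - 1) * (Real.log R - 1) / (2 * D₀ * (2 * Real.exp 1 - 1))) :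
    (1 + Real.sqrt (2 * D₀ * t)) ^ 2 / R ≤
      Real.exp (2 * D₀ * t - (Real.exp 1 - 1) * (Real.log R - 1) / (2 * Real.exp 1 - 1)) :=
  rate_comparison_real_complex_general R D₀ t hR hD ht₀
end

section
/- Let a be a nonzero complex number with Im a < 0 and let x₀ ∈ ℂ with 1 + e^{i x₀}(e^{i a t} − 1) ≠ 0 for all t ≥ 0. Then e^{−i a t}(1 + e^{i x₀}(e^{i a t} − 1)) → e^{i x₀} as t → ∞; consequently the solution x(t) = at + x₀ + i·Log(1 + (e^{iat} − 1)e^{ix₀}) of ẋ = a(1 − e^{ix}) satisfies e^{i x(t)} = e^{i(at + x₀)}/(1 + e^{ix₀}(e^{iat} − 1)) → 1 as t → ∞. -/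
open Complex Filter

theorem long_time_behavior (a x₀ : ℂ) (ha : a ≠ 0) (hIm : a.im < 0)
    (hnz : ∀ t : ℝ, 0 ≤ t → 1 + Complex.exp (I * x₀) * (Complex.exp (I * a * t) - 1) ≠ 0) :
    Tendsto (fun t : ℝ =>
        Complex.exp (-(I * a * t)) * (1 + Complex.exp (I * x₀) * (Complex.exp (I * a * t) - 1)))
      atTop (nhds (Complex.exp (I * x₀))) ∧
    Tendsto (fun t : ℝ =>
        Complex.exp (I * (a * t + x₀)) / (1 + Complex.exp (I * x₀) * (Complex.exp (I * a * t) - 1)))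
      atTop (nhds 1) := by
  have h0 : Tendsto (fun t : ℝ => Complex.exp (-(I * a * t))) atTop (nhds 0) := by
    rw [tendsto_zero_iff_norm_tendsto_zero]
    have hn : (fun t : ℝ => ‖Complex.exp (-(I * a * t))‖) =
        fun t : ℝ => Real.exp (a.im * t) := by
      funext t
      rw [Complex.norm_exp]
      congr 1
      simp [Complex.mul_re]
    rw [hn]
    apply Real.tendsto_exp_atBot.comp
    exact Tendsto.const_mul_atTop_of_neg hIm tendsto_id
  have h1 : Tendsto (fun t : ℝ =>
      Complex.exp (-(I * a * t)) * (1 + Complex.exp (I * x₀) * (Complex.exp (I * a * t) - 1)))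
      atTop (nhds (Complex.exp (I * x₀))) := by
    have heq : (fun t : ℝ =>
        Complex.exp (-(I * a * t)) * (1 + Complex.exp (I * x₀) * (Complex.exp (I * a * t) - 1)))
        = fun t : ℝ =>
          Complex.exp (-(I * a * t)) * (1 - Complex.exp (I * x₀)) + Complex.exp (I * x₀) := by
      funext t
      have h : Complex.exp (-(I * a * t)) * Complex.exp (I * a * t) = 1 := by
        rw [← Complex.exp_add, neg_add_cancel, Complex.exp_zero]
      linear_combination Complex.exp (I * x₀) * h
    rw [heq]
    simpa using (h0.mul_const (1 - Complex.exp (I * x₀))).add_const (Complex.exp (I * x₀))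
  refine ⟨h1, ?_⟩
  have heq2 : (fun t : ℝ =>
      Complex.exp (I * (a * t + x₀)) / (1 + Complex.exp (I * x₀) * (Complex.exp (I * a * t) - 1)))
      = fun t : ℝ => Complex.exp (I * x₀) /
        (Complex.exp (-(I * a * t)) *
          (1 + Complex.exp (I * x₀) * (Complex.exp (I * a * t) - 1))) := by
    funext t
    rw [div_mul_eq_div_div_swap, Complex.exp_neg, div_eq_mul_inv _ (Complex.exp (I * a * t))⁻¹,
      inv_inv, mul_add, Complex.exp_add]
    ring
  rw [heq2]
  have := (tendsto_const_nhds : Tendsto (fun _ : ℝ => Complex.exp (I * x₀)) atTop _).div h1 (Complex.exp_ne_zero (I * x₀))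
  simpa [div_self (Complex.exp_ne_zero (I * x₀)), Pi.div_def] using this
end

section
/- Let D₀ > 0, R > 0, μ₀ > 0, τ ≥ 0 with τ < μ₀R/(D₀+μ₀), and let N ≥ 1. Suppose nonnegative numbers s_k(t) (1 ≤ k ≤ N, t ≥ 0) satisfy s_k(t) ≤ D₀ k ∫₀^t e^{−kμ₀(t−s)} (∑_{l=k+1}^N s_l(s) + (μ₀/D₀)(τ/R)^N) ds for all t ≥ 0 and all k. Then by backward induction on k, ∑_{l=k}^N s_l(t) + (μ₀/D₀)(τ/R)^N ≤ (μ₀/D₀)((D₀+μ₀)/μ₀)^{N+1−k} (τ/R)^N for every 1 ≤ k ≤ N and t ≥ 0; in particular s₁(t) ≤ (μ₀/D₀)((D₀+μ₀)/μ₀)^N (τ/R)^N − (μ₀/D₀)(τ/R)^N. -/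
set_option maxHeartbeats 800000


theorem inductive_integral_estimate (D₀ R μ₀ τ : ℝ) (hD : 0 < D₀) (hR : 0 < R) (hμ : 0 < μ₀)
    (hτ₀ : 0 ≤ τ) (hτ : τ < μ₀ * R / (D₀ + μ₀)) (N : ℕ) (hN : 1 ≤ N)
    (s : ℕ → ℝ → ℝ)
    (hnonneg : ∀ k t, 0 ≤ t → 0 ≤ s k t)
    (hineq : ∀ k, 1 ≤ k → k ≤ N → ∀ t, 0 ≤ t →
      s k t ≤ D₀ * k * ∫ x in (0 : ℝ)..t,
        Real.exp (-((k : ℝ) * μ₀) * (t - x)) *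
          ((∑ l ∈ Finset.Icc (k + 1) N, s l x) + (μ₀ / D₀) * (τ / R) ^ N)) :
    (∀ k, 1 ≤ k → k ≤ N → ∀ t, 0 ≤ t →
        (∑ l ∈ Finset.Icc k N, s l t) + (μ₀ / D₀) * (τ / R) ^ N ≤
          (μ₀ / D₀) * ((D₀ + μ₀) / μ₀) ^ (N + 1 - k) * (τ / R) ^ N) ∧
      ∀ t, 0 ≤ t →
        s 1 t ≤ (μ₀ / D₀) * ((D₀ + μ₀) / μ₀) ^ N * (τ / R) ^ N -
          (μ₀ / D₀) * (τ / R) ^ N := by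
  set c : ℝ := (μ₀ / D₀) * (τ / R) ^ N with hc
  set A : ℝ := (D₀ + μ₀) / μ₀ with hA
  have hc0 : 0 ≤ c := by
    apply mul_nonneg (le_of_lt (div_pos hμ hD))
    exact pow_nonneg (div_nonneg hτ₀ hR.le) N
  have hA1 : 1 ≤ A := by
    rw [hA, le_div_iff₀ hμ]; linarith
  have hA0 : 0 ≤ A := le_trans zero_le_one hA1
  have key : ∀ d : ℕ, ∀ k, k + d = N + 1 → 1 ≤ k → ∀ t, 0 ≤ t →
      (∑ l ∈ Finset.Icc k N, s l t) + c ≤ c * A ^ d := by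
    intro d
    induction d with
    | zero =>
      intro k hk hk1 t ht
      have : k = N + 1 := by omega
      subst this
      rw [Finset.Icc_eq_empty (by omega)]
      simp
    | succ d ih =>
      intro k hk hk1 t ht
      have hkN : k ≤ N := by omega
      have ih' : ∀ x : ℝ, 0 ≤ x →
          (∑ l ∈ Finset.Icc (k + 1) N, s l x) + c ≤ c * A ^ d := by
        intro x hx
        exact ih (k + 1) (by omega) (by omega) x hx
      -- bound s k t
      have hkpos : (0 : ℝ) < (k : ℝ) := by exact_mod_cast hk1
      have hapos : (0 : ℝ) < (k : ℝ) * μ₀ := mul_pos hkpos hμ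
      set a : ℝ := (k : ℝ) * μ₀ with ha
      have hsk : s k t ≤ (D₀ / μ₀) * (c * A ^ d) := by
        have hmain := hineq k hk1 hkN t ht
        set f : ℝ → ℝ := fun x => Real.exp (-a * (t - x)) *
            ((∑ l ∈ Finset.Icc (k + 1) N, s l x) + c) with hf
        set g : ℝ → ℝ := fun x => Real.exp (-a * (t - x)) * (c * A ^ d) with hg
        have hgcont : Continuous g := by
          apply Continuous.mul _ continuous_const
          exact Real.continuous_exp.comp (continuous_const.mul (continuous_const.sub continuous_id))
        have hgint : IntervalIntegrable g MeasureTheory.volume 0 t :=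
          hgcont.intervalIntegrable 0 t
        -- value of ∫ g
        have hE : (∫ x in (0:ℝ)..t, Real.exp (-a * (t - x))) ≤ a⁻¹ := by
          have hderiv : ∀ x ∈ Set.uIcc (0:ℝ) t,
              HasDerivAt (fun x => a⁻¹ * Real.exp (-a * (t - x)))
                (Real.exp (-a * (t - x))) x := by
            intro x _
            have h1 : HasDerivAt (fun x : ℝ => -a * (t - x)) a x := by
              simpa using (HasDerivAt.const_sub t (hasDerivAt_id x)).const_mul (-a)
            have h2 := (Real.hasDerivAt_exp (-a * (t - x))).comp x h1
            have h3 := h2.const_mul a⁻¹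
            have h4 : a⁻¹ * (Real.exp (-a * (t - x)) * a) = Real.exp (-a * (t - x)) := by
              rw [mul_comm (Real.exp (-a * (t - x))) a, inv_mul_cancel_left₀ hapos.ne']
            rw [h4] at h3
            exact h3
          have hint : IntervalIntegrable (fun x => Real.exp (-a * (t - x)))
              MeasureTheory.volume 0 t :=
            (Real.continuous_exp.comp (continuous_const.mul
              (continuous_const.sub continuous_id))).intervalIntegrable 0 t
          rw [intervalIntegral.integral_eq_sub_of_hasDerivAt hderiv hint]
          have he1 : Real.exp (-a * (t - t)) = 1 := by simp
          have he2 : 0 < Real.exp (-a * (t - 0)) := Real.exp_pos _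
          rw [he1]
          have : a⁻¹ * Real.exp (-a * (t - 0)) ≥ 0 :=
            mul_nonneg (inv_nonneg.2 hapos.le) (Real.exp_pos _).le
          nlinarith [inv_nonneg.2 hapos.le]
        by_cases hfi : IntervalIntegrable f MeasureTheory.volume 0 t
        · have hmono : (∫ x in (0:ℝ)..t, f x) ≤ ∫ x in (0:ℝ)..t, g x := by
            apply intervalIntegral.integral_mono_on ht hfi hgint
            intro x hx
            exact mul_le_mul_of_nonneg_left (ih' x hx.1) (Real.exp_pos _).le
          have hgval : (∫ x in (0:ℝ)..t, g x) =
              (∫ x in (0:ℝ)..t, Real.exp (-a * (t - x))) * (c * A ^ d) := by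
            rw [hg]; exact intervalIntegral.integral_mul_const _ _
          have hCnn : 0 ≤ c * A ^ d := mul_nonneg hc0 (pow_nonneg hA0 d)
          calc s k t ≤ D₀ * k * ∫ x in (0:ℝ)..t, f x := hmain
            _ ≤ D₀ * k * ∫ x in (0:ℝ)..t, g x := by
                apply mul_le_mul_of_nonneg_left hmono
                positivity
            _ = D₀ * k * ((∫ x in (0:ℝ)..t, Real.exp (-a * (t - x))) * (c * A ^ d)) := by
                rw [hgval]
            _ ≤ D₀ * k * (a⁻¹ * (c * A ^ d)) := by
                apply mul_le_mul_of_nonneg_left _ (by positivity)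
                exact mul_le_mul_of_nonneg_right hE hCnn
            _ = (D₀ / μ₀) * (c * A ^ d) := by
                rw [ha]
                field_simp
        · have : (∫ x in (0:ℝ)..t, f x) = 0 := intervalIntegral.integral_undef hfi
          have h0 : s k t ≤ 0 := by
            calc s k t ≤ D₀ * k * ∫ x in (0:ℝ)..t, f x := hmain
              _ = 0 := by rw [this]; ring
          have : 0 ≤ (D₀ / μ₀) * (c * A ^ d) := by positivity
          linarith
      -- combine
      have hsplit : (∑ l ∈ Finset.Icc k N, s l t) =
          s k t + ∑ l ∈ Finset.Icc (k + 1) N, s l t := by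
        rw [Finset.Icc_add_one_left_eq_Ioc, ← Finset.Ioc_insert_left hkN,
          Finset.sum_insert (by simp)]
      rw [hsplit]
      have h2 := ih' t ht
      have : c * A ^ (d + 1) = (D₀ / μ₀) * (c * A ^ d) + c * A ^ d := by
        rw [pow_succ, hA]
        field_simp
      rw [this]
      linarith
  constructor
  · intro k hk1 hkN t ht
    have := key (N + 1 - k) k (by omega) hk1 t ht
    calc (∑ l ∈ Finset.Icc k N, s l t) + c ≤ c * A ^ (N + 1 - k) := this
      _ = (μ₀ / D₀) * A ^ (N + 1 - k) * (τ / R) ^ N := by rw [hc]; ring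
  · intro t ht
    have h := key N 1 (by omega) (by omega) t ht
    have hmem : 1 ∈ Finset.Icc 1 N := by simp [hN]
    have hle : s 1 t ≤ ∑ l ∈ Finset.Icc 1 N, s l t :=
      Finset.single_le_sum (fun i _ => hnonneg i t ht) hmem
    have : c * A ^ N = (μ₀ / D₀) * A ^ N * (τ / R) ^ N := by rw [hc]; ring
    linarith [this ▸ h]
end
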